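/- If 3 ≤ m ≤ n and M ≥ 300·n, then for every vector y ∈ ℝ^(E ⊔ V), Σ_{v∈S} ⟨y, z_v⟩² ≤ ((m + 1.515)/2)·‖y‖²·max_{v∈S} ‖z_v‖². -/

import Mathlib

/-!
Every vertex meets exactly `n` edges of `E`, so `‖x_v‖² = Q := M² + n`, and two distinct vertices
share at most one edge, so `⟪x_u, x_v⟫ ∈ [-1, 0]`. After centering at the centroid, the Gram
matrix of the `z_v` has diagonal entries at least `(Q(m - 1) - m)/m` and off-diagonal entries of
size at most `β = (Q + 2m)/m`. A Gershgorin-type bound for the Gram matrix gives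
`∑ ⟪y, z_v⟫² ≤ (K + (m - 1)β)‖y‖²` with `K = max ‖z_v‖²`, and for `M` large `K + (m - 1)β` is
about `2K`, which is below `(m + 1.515)/2 · K` once `m ≥ 3`.
-/

open Finset
open scoped InnerProductSpace

lemma EuclideanSpace.real_inner_eq_sum_inl_add_sum_inr {α β : Type*} [Fintype α] [Fintype β]
    (a b : EuclideanSpace ℝ (α ⊕ β)) :
    ⟪a, b⟫_ℝ = ∑ i, a (Sum.inl i) * b (Sum.inl i) + ∑ j, a (Sum.inr j) * b (Sum.inr j) := by
  simp only [PiLp.inner_apply, Fintype.sum_sum_type, RCLike.inner_apply, conj_trivial, mul_comm]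

section InnerProduct

variable {ι F : Type*} [NormedAddCommGroup F] [InnerProductSpace ℝ F]

lemma real_inner_sub_sub (a b c : F) :
    ⟪a - c, b - c⟫_ℝ = ⟪a, b⟫_ℝ - ⟪a, c⟫_ℝ - ⟪b, c⟫_ℝ + ⟪c, c⟫_ℝ := by
  rw [inner_sub_left, inner_sub_right, inner_sub_right, real_inner_comm c b]
  ring

variable {S : Finset ι} {z : ι → F} {K β : ℝ}

/-- Test the quadratic form bound on `w = ∑ ⟪y, z v⟫ • z v`: then `T := ⟪y, w⟫` satisfies
`T² ≤ ‖y‖² ‖w‖² ≤ ‖y‖² C T`. -/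
lemma sum_inner_sq_le_of_norm_sq_sum_smul_le {C : ℝ} (hC : 0 ≤ C)
    (hquad : ∀ t : ι → ℝ, ‖∑ v ∈ S, t v • z v‖ ^ 2 ≤ C * ∑ v ∈ S, t v ^ 2) (y : F) :
    ∑ v ∈ S, ⟪y, z v⟫_ℝ ^ 2 ≤ C * ‖y‖ ^ 2 := by
  set T := ∑ v ∈ S, ⟪y, z v⟫_ℝ ^ 2
  set w := ∑ v ∈ S, ⟪y, z v⟫_ℝ • z v
  have hyw : ⟪y, w⟫_ℝ = T := by
    simp only [w, T, inner_sum, real_inner_smul_right, sq]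
  have hT : T ^ 2 ≤ ‖y‖ ^ 2 * (C * T) := by
    calc T ^ 2 ≤ (‖y‖ * ‖w‖) ^ 2 := by
          rw [← hyw]; exact sq_le_sq' (neg_le_of_abs_le (abs_real_inner_le_norm y w))
            (real_inner_le_norm y w)
      _ = ‖y‖ ^ 2 * ‖w‖ ^ 2 := by ring
      _ ≤ ‖y‖ ^ 2 * (C * T) := by gcongr; exact hquad _
  have hT0 : 0 ≤ T := Finset.sum_nonneg fun v _ => sq_nonneg _
  rcases hT0.eq_or_lt with h0 | hpos
  · rw [← h0]; positivity
  · nlinarith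

variable [DecidableEq ι]

lemma sum_sum_erase_abs_mul_le (t : ι → ℝ) :
    ∑ u ∈ S, ∑ v ∈ S.erase u, |t u| * |t v| ≤ (#S - 1 : ℝ) * ∑ v ∈ S, t v ^ 2 := by
  have hrow : ∀ u ∈ S, ∑ v ∈ S.erase u, |t u| * |t v| = |t u| * ∑ v ∈ S, |t v| - t u ^ 2 := by
    intro u hu
    rw [← Finset.mul_sum, Finset.sum_erase_eq_sub hu, mul_sub, ← abs_mul, abs_mul_self, sq]
  have hcs : (∑ v ∈ S, |t v|) ^ 2 ≤ #S * ∑ v ∈ S, t v ^ 2 := by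
    simpa only [sq_abs] using sq_sum_le_card_mul_sum_sq (s := S) (f := fun v => |t v|)
  rw [Finset.sum_congr rfl hrow, Finset.sum_sub_distrib, ← Finset.sum_mul, ← sq]
  linarith

lemma norm_sq_sum_smul_le_of_inner_le (hβ : 0 ≤ β) (hdiag : ∀ v ∈ S, ‖z v‖ ^ 2 ≤ K)
    (hoff : ∀ u ∈ S, ∀ v ∈ S, u ≠ v → |⟪z u, z v⟫_ℝ| ≤ β) (t : ι → ℝ) :
    ‖∑ v ∈ S, t v • z v‖ ^ 2 ≤ (K + (#S - 1) * β) * ∑ v ∈ S, t v ^ 2 := by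
  have hrow : ∀ u ∈ S, ∑ v ∈ S, t u * t v * ⟪z u, z v⟫_ℝ
      ≤ t u ^ 2 * K + (∑ v ∈ S.erase u, |t u| * |t v|) * β := by
    intro u hu
    rw [← Finset.add_sum_erase _ _ hu, Finset.sum_mul, real_inner_self_eq_norm_sq]
    refine add_le_add (by nlinarith [hdiag u hu, sq_nonneg (t u)])
      (Finset.sum_le_sum fun v hv => ?_)
    calc t u * t v * ⟪z u, z v⟫_ℝ ≤ |t u| * |t v| * |⟪z u, z v⟫_ℝ| := by
          rw [← abs_mul, ← abs_mul]; exact le_abs_self _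
      _ ≤ |t u| * |t v| * β := by
          gcongr
          exact hoff u hu v (Finset.mem_of_mem_erase hv) (Finset.ne_of_mem_erase hv).symm
  have hexp : ‖∑ v ∈ S, t v • z v‖ ^ 2 = ∑ u ∈ S, ∑ v ∈ S, t u * t v * ⟪z u, z v⟫_ℝ := by
    simp only [← real_inner_self_eq_norm_sq, sum_inner, inner_sum, real_inner_smul_left,
      real_inner_smul_right]
    rw [Finset.sum_comm]
    refine Finset.sum_congr rfl fun u _ => Finset.sum_congr rfl fun v _ => by ring
  calc ‖∑ v ∈ S, t v • z v‖ ^ 2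
      ≤ ∑ u ∈ S, (t u ^ 2 * K + (∑ v ∈ S.erase u, |t u| * |t v|) * β) := by
        rw [hexp]; exact Finset.sum_le_sum hrow
    _ = (∑ v ∈ S, t v ^ 2) * K + (∑ u ∈ S, ∑ v ∈ S.erase u, |t u| * |t v|) * β := by
        rw [Finset.sum_add_distrib, ← Finset.sum_mul, ← Finset.sum_mul]
    _ ≤ (∑ v ∈ S, t v ^ 2) * K + ((#S - 1) * ∑ v ∈ S, t v ^ 2) * β := by
        gcongr; exact sum_sum_erase_abs_mul_le t
    _ = (K + (#S - 1) * β) * ∑ v ∈ S, t v ^ 2 := by ring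

lemma sum_inner_sq_le_of_inner_le (hS : S.Nonempty) (hβ : 0 ≤ β) (hdiag : ∀ v ∈ S, ‖z v‖ ^ 2 ≤ K)
    (hoff : ∀ u ∈ S, ∀ v ∈ S, u ≠ v → |⟪z u, z v⟫_ℝ| ≤ β) (y : F) :
    ∑ v ∈ S, ⟪y, z v⟫_ℝ ^ 2 ≤ (K + (#S - 1) * β) * ‖y‖ ^ 2 := by
  obtain ⟨v, hv⟩ := hS
  have hC : 0 ≤ K + (#S - 1 : ℝ) * β := by
    have : (1 : ℝ) ≤ #S := by exact_mod_cast Finset.card_pos.2 ⟨v, hv⟩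
    nlinarith [hdiag v hv, sq_nonneg ‖z v‖]
  exact sum_inner_sq_le_of_norm_sq_sum_smul_le hC (norm_sq_sum_smul_le_of_inner_le hβ hdiag hoff) y

variable {x : ι → F} {c : F} {Q : ℝ}

lemma card_mul_inner_centroid_mem_Icc (hc : (#S : ℝ) • c = ∑ w ∈ S, x w)
    (hnorm : ∀ v ∈ S, ⟪x v, x v⟫_ℝ = Q)
    (hpair : ∀ u ∈ S, ∀ v ∈ S, u ≠ v → ⟪x u, x v⟫_ℝ ∈ Set.Icc (-1) 0)
    {v : ι} (hv : v ∈ S) :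
    #S * ⟪x v, c⟫_ℝ ∈ Set.Icc (Q - #S) Q := by
  have hsum : (#S : ℝ) * ⟪x v, c⟫_ℝ = Q + ∑ w ∈ S.erase v, ⟪x v, x w⟫_ℝ := by
    rw [← real_inner_smul_right, hc, inner_sum, ← Finset.add_sum_erase _ _ hv, hnorm v hv]
  have hpair' : ∀ w ∈ S.erase v, ⟪x v, x w⟫_ℝ ∈ Set.Icc (-1) 0 := fun w hw =>
    hpair v hv w (Finset.mem_of_mem_erase hw) (Finset.ne_of_mem_erase hw).symm
  have hlow := Finset.card_nsmul_le_sum _ _ _ fun w hw => (hpair' w hw).1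
  have hcard : (#(S.erase v) : ℝ) ≤ #S := by exact_mod_cast Finset.card_erase_le
  rw [nsmul_eq_mul, mul_neg_one] at hlow
  rw [hsum]
  exact ⟨by linarith, by linarith [Finset.sum_nonpos fun w hw => (hpair' w hw).2]⟩

lemma card_mul_inner_centroid_self_mem_Icc (hS : S.Nonempty) (hc : (#S : ℝ) • c = ∑ w ∈ S, x w)
    (hnorm : ∀ v ∈ S, ⟪x v, x v⟫_ℝ = Q)
    (hpair : ∀ u ∈ S, ∀ v ∈ S, u ≠ v → ⟪x u, x v⟫_ℝ ∈ Set.Icc (-1) 0) :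
    #S * ⟪c, c⟫_ℝ ∈ Set.Icc (Q - #S) Q := by
  have hm : (0 : ℝ) < #S := by exact_mod_cast hS.card_pos
  have hsum : (#S : ℝ) * (#S * ⟪c, c⟫_ℝ) = ∑ v ∈ S, #S * ⟪x v, c⟫_ℝ := by
    rw [← real_inner_smul_left, hc, sum_inner, Finset.mul_sum]
  have hlow : ∑ _v ∈ S, (Q - #S) ≤ ∑ v ∈ S, (#S : ℝ) * ⟪x v, c⟫_ℝ :=
    Finset.sum_le_sum fun v hv => (card_mul_inner_centroid_mem_Icc hc hnorm hpair hv).1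
  have hup : ∑ v ∈ S, (#S : ℝ) * ⟪x v, c⟫_ℝ ≤ ∑ _v ∈ S, Q :=
    Finset.sum_le_sum fun v hv => (card_mul_inner_centroid_mem_Icc hc hnorm hpair hv).2
  rw [← hsum, Finset.sum_const, nsmul_eq_mul] at hlow hup
  exact ⟨le_of_mul_le_mul_left hlow hm, le_of_mul_le_mul_left hup hm⟩

lemma le_card_mul_norm_sub_centroid_sq (hS : S.Nonempty) (hc : (#S : ℝ) • c = ∑ w ∈ S, x w)
    (hnorm : ∀ v ∈ S, ⟪x v, x v⟫_ℝ = Q)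
    (hpair : ∀ u ∈ S, ∀ v ∈ S, u ≠ v → ⟪x u, x v⟫_ℝ ∈ Set.Icc (-1) 0)
    {v : ι} (hv : v ∈ S) :
    Q * (#S - 1) - #S ≤ #S * ‖x v - c‖ ^ 2 := by
  obtain ⟨hp₁, hp₂⟩ := card_mul_inner_centroid_mem_Icc hc hnorm hpair hv
  obtain ⟨hr₁, hr₂⟩ := card_mul_inner_centroid_self_mem_Icc hS hc hnorm hpair
  rw [← real_inner_self_eq_norm_sq, real_inner_sub_sub, hnorm v hv]
  linarith

lemma abs_inner_sub_centroid_le (hS : S.Nonempty) (hc : (#S : ℝ) • c = ∑ w ∈ S, x w)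
    (hnorm : ∀ v ∈ S, ⟪x v, x v⟫_ℝ = Q)
    (hpair : ∀ u ∈ S, ∀ v ∈ S, u ≠ v → ⟪x u, x v⟫_ℝ ∈ Set.Icc (-1) 0)
    {u v : ι} (hu : u ∈ S) (hv : v ∈ S) (huv : u ≠ v) :
    |⟪x u - c, x v - c⟫_ℝ| ≤ (Q + 2 * #S) / #S := by
  obtain ⟨hp₁, hp₂⟩ := card_mul_inner_centroid_mem_Icc hc hnorm hpair hu
  obtain ⟨hq₁, hq₂⟩ := card_mul_inner_centroid_mem_Icc hc hnorm hpair hv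
  obtain ⟨hr₁, hr₂⟩ := card_mul_inner_centroid_self_mem_Icc hS hc hnorm hpair
  obtain ⟨hg₁, hg₂⟩ := hpair u hu v hv huv
  have hQ : 0 ≤ Q := hnorm u hu ▸ real_inner_self_nonneg
  have hm : (0 : ℝ) < #S := by exact_mod_cast hS.card_pos
  have hg₁' := mul_le_mul_of_nonneg_left hg₁ hm.le
  have hg₂' := mul_le_mul_of_nonneg_left hg₂ hm.le
  have key : |#S * ⟪x u - c, x v - c⟫_ℝ| ≤ Q + 2 * #S := by
    rw [real_inner_sub_sub, abs_le]
    constructor <;> linarith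
  rwa [abs_mul, Nat.abs_cast, mul_comm, ← le_div_iff₀ hm] at key

end InnerProduct

lemma gram_row_bound_le {m Q K : ℝ} (hm : 3 ≤ m) (hQ : 5 * m ^ 2 ≤ Q)
    (hK : Q * (m - 1) - m ≤ m * K) :
    K + (m - 1) * ((Q + 2 * m) / m) ≤ (m + 1.515) / 2 * K := by
  have hm0 : 0 < m := by linarith
  -- The right side is `2K + (m - 2.485)/2 · K` and the left side is about `2K`.
  have hslack : (1.03 : ℝ) ≤ (m - 1) * (m - 2.485) := by nlinarith
  have hQ' : m * (5 * m - 4.485) ≤ Q * ((m - 1) * (m - 2.485)) := by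
    nlinarith [mul_le_mul_of_nonneg_left hslack (by nlinarith : (0 : ℝ) ≤ Q)]
  rw [mul_div_assoc', ← sub_nonneg]
  have key : 0 ≤ (m - 0.485) * (m * K) - 2 * ((m - 1) * (Q + 2 * m)) := by
    nlinarith [mul_le_mul_of_nonneg_left hK (by linarith : (0 : ℝ) ≤ m - 0.485)]
  have : (m + 1.515) / 2 * K - (K + (m - 1) * (Q + 2 * m) / m)
      = ((m - 0.485) * (m * K) - 2 * ((m - 1) * (Q + 2 * m))) / (2 * m) := by
    field_simp; ring
  rw [this]; positivity

section Incidence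

variable {V E : Type*} [DecidableEq V] (tail head : E → V)

/-- The coordinate `x_v(e)`; loops are incoming, so they get `-1`. -/
def signedIncidence (v : V) (e : E) : ℝ :=
  if head e = v then -1 else if tail e = v then 1 else 0

lemma signedIncidence_mul_of_ne {u v : V} (huv : u ≠ v) (e : E) :
    signedIncidence tail head u e * signedIncidence tail head v e = 0 ∨
      (signedIncidence tail head u e * signedIncidence tail head v e = -1 ∧
        tail e ≠ head e ∧ s(tail e, head e) = s(u, v)) := by
  have hvu := huv.symm
  unfold signedIncidence
  split_ifs <;> simp_all [Sym2.eq_swap]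

variable [Fintype E]

lemma sum_signedIncidence_mul_self (v : V) :
    ∑ e, signedIncidence tail head v e * signedIncidence tail head v e
      = #{e | tail e = v ∨ head e = v} := by
  rw [Finset.natCast_card_filter]
  refine Finset.sum_congr rfl fun e _ => ?_
  unfold signedIncidence
  split_ifs <;> simp_all

lemma sum_signedIncidence_mul_mem_Icc
    (hinj : ∀ e₁ e₂ : E, tail e₁ ≠ head e₁ → tail e₂ ≠ head e₂ →
      (s(tail e₁, head e₁) : Sym2 V) = s(tail e₂, head e₂) → e₁ = e₂)
    {u v : V} (huv : u ≠ v) :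
    ∑ e, signedIncidence tail head u e * signedIncidence tail head v e ∈ Set.Icc (-1) 0 := by
  set f := fun e => signedIncidence tail head u e * signedIncidence tail head v e
  have hf := signedIncidence_mul_of_ne tail head huv
  have hsupp : #{e | f e ≠ 0} ≤ 1 := by
    refine Finset.card_le_one.2 fun a ha b hb => ?_
    obtain ⟨-, hab, ha'⟩ := (hf a).resolve_left (Finset.mem_filter.1 ha).2
    obtain ⟨-, hbb, hb'⟩ := (hf b).resolve_left (Finset.mem_filter.1 hb).2
    exact hinj a b hab hbb (ha'.trans hb'.symm)
  have hlow := Finset.card_nsmul_le_sum {e | f e ≠ 0} f (-1) fun e _ => by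
    rcases hf e with h | ⟨h, -⟩ <;> simp only [f, h] <;> norm_num
  rw [Finset.sum_filter_ne_zero, nsmul_eq_mul] at hlow
  have hsupp' : (#{e | f e ≠ 0} : ℝ) ≤ 1 := by exact_mod_cast hsupp
  refine ⟨by linarith, Finset.sum_nonpos fun e _ => ?_⟩
  rcases hf e with h | ⟨h, -⟩ <;> simp only [h] <;> norm_num

variable [Fintype V]

lemma real_inner_eq_sum_signedIncidence_mul {M : ℝ} {x : V → EuclideanSpace ℝ (E ⊕ V)}
    (hxE : ∀ v e, x v (Sum.inl e) = signedIncidence tail head v e)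
    (hxV : ∀ v u, x v (Sum.inr u) = if u = v then M else 0) (u v : V) :
    ⟪x u, x v⟫_ℝ = ∑ e, signedIncidence tail head u e * signedIncidence tail head v e
      + if u = v then M ^ 2 else 0 := by
  simp only [EuclideanSpace.real_inner_eq_sum_inl_add_sum_inr, hxE, hxV, ite_mul, mul_ite,
    mul_zero, zero_mul, Finset.sum_ite_eq', Finset.mem_univ, if_true, sq, eq_comm (a := v)]

lemma real_inner_mem_Icc_of_ne {M : ℝ} {x : V → EuclideanSpace ℝ (E ⊕ V)}
    (hinj : ∀ e₁ e₂ : E, tail e₁ ≠ head e₁ → tail e₂ ≠ head e₂ →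
      (s(tail e₁, head e₁) : Sym2 V) = s(tail e₂, head e₂) → e₁ = e₂)
    (hxE : ∀ v e, x v (Sum.inl e) = signedIncidence tail head v e)
    (hxV : ∀ v u, x v (Sum.inr u) = if u = v then M else 0) {u v : V} (huv : u ≠ v) :
    ⟪x u, x v⟫_ℝ ∈ Set.Icc (-1) 0 := by
  rw [real_inner_eq_sum_signedIncidence_mul tail head hxE hxV, if_neg huv, add_zero]
  exact sum_signedIncidence_mul_mem_Icc tail head hinj huv

variable (G : SimpleGraph V) [DecidableRel G.Adj]

lemma card_nonloop_incident_eq_degree (hadj : ∀ e : E, tail e ≠ head e → G.Adj (tail e) (head e))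
    (hinj : ∀ e₁ e₂ : E, tail e₁ ≠ head e₁ → tail e₂ ≠ head e₂ →
      (s(tail e₁, head e₁) : Sym2 V) = s(tail e₂, head e₂) → e₁ = e₂)
    (hsurj : ∀ u v : V, G.Adj u v → ∃ e : E, (s(tail e, head e) : Sym2 V) = s(u, v))
    (v : V) :
    #{e | tail e ≠ head e ∧ (tail e = v ∨ head e = v)} = G.degree v := by
  rw [← G.card_incidenceFinset_eq_degree]
  refine Finset.card_bij (fun e _ => s(tail e, head e)) (fun e he => ?_)
    (fun e₁ h₁ e₂ h₂ h => hinj e₁ e₂ (Finset.mem_filter.1 h₁).2.1 (Finset.mem_filter.1 h₂).2.1 h)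
    (fun d hd => ?_)
  · obtain ⟨hloop, hv⟩ := (Finset.mem_filter.1 he).2
    rw [SimpleGraph.mem_incidenceFinset, SimpleGraph.mk'_mem_incidenceSet_iff]
    exact ⟨hadj e hloop, by tauto⟩
  · induction d using Sym2.ind with
    | h a b =>
      rw [SimpleGraph.mem_incidenceFinset, SimpleGraph.mk'_mem_incidenceSet_iff] at hd
      obtain ⟨e, he⟩ := hsurj a b hd.1
      have hloop : tail e ≠ head e := fun h =>
        hd.1.ne (Sym2.mk_isDiag_iff.1 (he ▸ Sym2.mk_isDiag_iff.2 h))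
      refine ⟨e, Finset.mem_filter.2 ⟨Finset.mem_univ e, hloop, ?_⟩, he⟩
      rcases Sym2.eq_iff.1 he with ⟨h₁, h₂⟩ | ⟨h₁, h₂⟩ <;> rcases hd.2 with rfl | rfl <;>
        simp [h₁, h₂]

lemma card_incident_eq_card (hadj : ∀ e : E, tail e ≠ head e → G.Adj (tail e) (head e))
    (hinj : ∀ e₁ e₂ : E, tail e₁ ≠ head e₁ → tail e₂ ≠ head e₂ →
      (s(tail e₁, head e₁) : Sym2 V) = s(tail e₂, head e₂) → e₁ = e₂)
    (hsurj : ∀ u v : V, G.Adj u v → ∃ e : E, (s(tail e, head e) : Sym2 V) = s(u, v))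
    (hloops : ∀ v : V, (Finset.univ.filter fun e : E => tail e = v ∧ head e = v).card
        = Fintype.card V - G.degree v) (v : V) :
    #{e | tail e = v ∨ head e = v} = Fintype.card V := by
  have hsplit : #{e | tail e = v ∨ head e = v}
      = #{e | tail e = v ∧ head e = v} + #{e | tail e ≠ head e ∧ (tail e = v ∨ head e = v)} := by
    rw [← Finset.card_filter_add_card_filter_not (p := fun e => tail e = head e),
      Finset.filter_filter, Finset.filter_filter]
    congr 2 <;> ext e <;> simp only [Finset.mem_filter, Finset.mem_univ, true_and] <;> grind
  have := G.degree_lt_card_verts v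
  rw [hsplit, hloops, card_nonloop_incident_eq_degree tail head G hadj hinj hsurj v]
  omega

lemma real_inner_self_eq_sq_add_card {M : ℝ} {x : V → EuclideanSpace ℝ (E ⊕ V)}
    (hadj : ∀ e : E, tail e ≠ head e → G.Adj (tail e) (head e))
    (hinj : ∀ e₁ e₂ : E, tail e₁ ≠ head e₁ → tail e₂ ≠ head e₂ →
      (s(tail e₁, head e₁) : Sym2 V) = s(tail e₂, head e₂) → e₁ = e₂)
    (hsurj : ∀ u v : V, G.Adj u v → ∃ e : E, (s(tail e, head e) : Sym2 V) = s(u, v))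
    (hloops : ∀ v : V, (Finset.univ.filter fun e : E => tail e = v ∧ head e = v).card
        = Fintype.card V - G.degree v)
    (hxE : ∀ v e, x v (Sum.inl e) = signedIncidence tail head v e)
    (hxV : ∀ v u, x v (Sum.inr u) = if u = v then M else 0) (v : V) :
    ⟪x v, x v⟫_ℝ = M ^ 2 + Fintype.card V := by
  rw [real_inner_eq_sum_signedIncidence_mul tail head hxE hxV, if_pos rfl,
    sum_signedIncidence_mul_self, card_incident_eq_card tail head G hadj hinj hsurj hloops,
    add_comm]

end Incidence

/-- If `3 ≤ m ≤ n` and `M ≥ 300·n`, then for every vector `y`,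
`Σ_{v∈S} ⟨y, z_v⟩² ≤ ((m + 1.515)/2)·‖y‖²·max_{v∈S} ‖z_v‖²`. -/
theorem sum_inner_sq_bound
    {V E : Type*} [Fintype V] [DecidableEq V] [Fintype E]
    (G : SimpleGraph V) [DecidableRel G.Adj]
    (tail head : E → V)
    (hadj : ∀ e : E, tail e ≠ head e → G.Adj (tail e) (head e))
    (hinj : ∀ e₁ e₂ : E, tail e₁ ≠ head e₁ → tail e₂ ≠ head e₂ →
      (s(tail e₁, head e₁) : Sym2 V) = s(tail e₂, head e₂) → e₁ = e₂)
    (hsurj : ∀ u v : V, G.Adj u v → ∃ e : E, (s(tail e, head e) : Sym2 V) = s(u, v))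
    (hloops : ∀ v : V, (Finset.univ.filter fun e : E => tail e = v ∧ head e = v).card
        = Fintype.card V - G.degree v)
    (M : ℝ)
    (x : V → EuclideanSpace ℝ (E ⊕ V))
    (hxE : ∀ (v : V) (e : E),
      x v (Sum.inl e) = if head e = v then -1 else if tail e = v then 1 else 0)
    (hxV : ∀ v u : V, x v (Sum.inr u) = if u = v then M else 0)
    (S : Finset V) (m : ℕ) (hS : S.card = m)
    (c : EuclideanSpace ℝ (E ⊕ V)) (hc : c = (m : ℝ)⁻¹ • ∑ v ∈ S, x v)
    (hm : 3 ≤ m) (hmn : m ≤ Fintype.card V)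
    (hM300 : 300 * (Fintype.card V : ℝ) ≤ M)
    (z : V → EuclideanSpace ℝ (E ⊕ V)) (hz : ∀ v : V, z v = x v - c)
 :
    ∀ y : EuclideanSpace ℝ (E ⊕ V),
      ∑ v ∈ S, ⟪y, z v⟫_ℝ ^ 2 ≤
        (((m : ℝ) + 1.515) / 2) * ‖y‖ ^ 2 *
          S.sup' (Finset.card_pos.mp (by rw [hS]; omega)) (fun v => ‖z v‖ ^ 2) := by
  intro y
  obtain rfl : z = fun v => x v - c := funext hz
  subst hS
  have hSne : S.Nonempty := Finset.card_pos.mp (by omega)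
  obtain ⟨v₀, hv₀⟩ := id hSne
  set Q := M ^ 2 + Fintype.card V
  set K := S.sup' _ fun v => ‖x v - c‖ ^ 2
  have hc' : (#S : ℝ) • c = ∑ v ∈ S, x v := by rw [hc, smul_inv_smul₀ (by positivity)]
  have hnorm : ∀ v ∈ S, ⟪x v, x v⟫_ℝ = Q := fun v _ =>
    real_inner_self_eq_sq_add_card tail head G hadj hinj hsurj hloops hxE hxV v
  have hpair : ∀ u ∈ S, ∀ v ∈ S, u ≠ v → ⟪x u, x v⟫_ℝ ∈ Set.Icc (-1) 0 := fun _ _ _ _ huv =>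
    real_inner_mem_Icc_of_ne tail head hinj hxE hxV huv
  have hdiag : ∀ v ∈ S, ‖x v - c‖ ^ 2 ≤ K := fun v hv => Finset.le_sup' (fun v => ‖x v - c‖ ^ 2) hv
  have hK : Q * (#S - 1) - #S ≤ #S * K :=
    (le_card_mul_norm_sub_centroid_sq hSne hc' hnorm hpair hv₀).trans
      (mul_le_mul_of_nonneg_left (hdiag v₀ hv₀) (Nat.cast_nonneg _))
  have hQ : 5 * (#S : ℝ) ^ 2 ≤ Q := by
    have : (#S : ℝ) ≤ Fintype.card V := by exact_mod_cast hmn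
    nlinarith
  calc ∑ v ∈ S, ⟪y, x v - c⟫_ℝ ^ 2 ≤ (K + (#S - 1) * ((Q + 2 * #S) / #S)) * ‖y‖ ^ 2 :=
        sum_inner_sq_le_of_inner_le hSne (by positivity) hdiag
          (fun u hu v hv huv => abs_inner_sub_centroid_le hSne hc' hnorm hpair hu hv huv) y
    _ ≤ (#S + 1.515) / 2 * K * ‖y‖ ^ 2 := by
        gcongr; exact gram_row_bound_le (by exact_mod_cast hm) hQ hK
    _ = _ := by ring
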